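/- The partial derivative ∂v_N/∂x exists almost everywhere on R_N, and ∬_{R_N} |∂v_N/∂x|² dx dy ≤ 16/N. -/

import Mathlib

open MeasureTheory Set Metric
open Topology Filter

noncomputable section

/-- The rectangle `R_N = [-3N, 3N] × [-1, 1]`. -/
def RN (N : ℝ) : Set (ℝ × ℝ) := Icc (-(3*N)) (3*N) ×ˢ Icc (-1 : ℝ) 1

/-- The boundary datum `f_N`. -/
def fN (α N x : ℝ) : ℝ :=
  if |x| ≤ N then 1 - α
  else if |x| ≤ 2*N then |x| * (1 + α) / N - 2*α
  else 2

/-- The Alt–Caffarelli–Friedman type energy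
`J_Q(w) = ∬_Q |∇w|² + |{w ≠ 0} ∩ Q|`. -/
def Jen (Q : Set (ℝ × ℝ)) (w : ℝ × ℝ → ℝ) : ℝ :=
  (∫ p in Q, ((fderiv ℝ w p (1, 0))^2 + (fderiv ℝ w p (0, 1))^2)) +
    (volume ({p : ℝ × ℝ | w p ≠ 0} ∩ Q)).toReal

/-- Membership in `W^{1,2}(Ω)` (a.e. differentiable, with function and gradient in `L²`). -/
def MemW12 (Ω : Set (ℝ × ℝ)) (w : ℝ × ℝ → ℝ) : Prop :=
  (∀ᵐ p ∂(volume.restrict Ω), DifferentiableAt ℝ w p) ∧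
  MemLp w 2 (volume.restrict Ω) ∧
  MemLp (fun p => fderiv ℝ w p) 2 (volume.restrict Ω)

/-- The boundary conditions `w(x, ±1) = ± f_N(x)`. -/
def BdryVals (α N : ℝ) (w : ℝ × ℝ → ℝ) : Prop :=
  ∀ x ∈ Icc (-(3*N)) (3*N), w (x, 1) = fN α N x ∧ w (x, -1) = -(fN α N x)

/-- `u` is a minimizer of `J_{R_N}` subject to the boundary conditions, identified with
its continuous representative on the interior of `R_N`. -/
def IsMinimizer (α N : ℝ) (u : ℝ × ℝ → ℝ) : Prop :=
  MemW12 (RN N) u ∧ BdryVals α N u ∧ ContinuousOn u (interior (RN N)) ∧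
  ∀ v : ℝ × ℝ → ℝ, MemW12 (RN N) v → BdryVals α N v → Jen (RN N) u ≤ Jen (RN N) v

/-- The slice minimizer `v_N`. -/
def vN (α N : ℝ) (p : ℝ × ℝ) : ℝ :=
  if 1 ≤ fN α N p.1 then p.2 * fN α N p.1
  else Real.sign p.2 * max (|p.2| - 1 + fN α N p.1) 0

/-- The sliced energy `S_Q(w) = ∬_Q |∂w/∂y|² + |{w ≠ 0} ∩ Q|`. -/
def Sen (Q : Set (ℝ × ℝ)) (w : ℝ × ℝ → ℝ) : ℝ :=
  (∫ p in Q, (fderiv ℝ w p (0, 1))^2) + (volume ({p : ℝ × ℝ | w p ≠ 0} ∩ Q)).toReal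

/-- `Γ⁺(u) = ∂{u > 0}`. -/
def Gammap (N : ℝ) (u : ℝ × ℝ → ℝ) : Set (ℝ × ℝ) := frontier {p ∈ RN N | 0 < u p}

/-- `Γ⁻(u) = ∂{u < 0}`. -/
def Gammam (N : ℝ) (u : ℝ × ℝ → ℝ) : Set (ℝ × ℝ) := frontier {p ∈ RN N | u p < 0}

/-- The branch points `Γ_BP(u) = Γ_TP(u) ∩ closure(Γ_OP(u))`. -/
def GammaBP (N : ℝ) (u : ℝ × ℝ → ℝ) : Set (ℝ × ℝ) :=
  (Gammap N u ∩ Gammam N u) ∩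
    closure ((Gammap N u ∪ Gammam N u) \ (Gammap N u ∩ Gammam N u))

lemma fN_closed {N : ℝ} (hN : 0 < N) (x : ℝ) :
    fN (1/10) N x = min (max (11/(10*N)*|x| - 1/5) (9/10)) 2 := by
  have hx : (0:ℝ) ≤ |x| := abs_nonneg x
  have h10 : (0:ℝ) < 10*N := by linarith
  have key : ∀ r c : ℝ, 11/(10*N)*r ≤ c ↔ 11*r ≤ c*(10*N) := fun r c => by
    rw [div_mul_eq_mul_div, div_le_iff₀ h10]
  have key2 : ∀ r c : ℝ, c ≤ 11/(10*N)*r ↔ c*(10*N) ≤ 11*r := fun r c => by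
    rw [div_mul_eq_mul_div, le_div_iff₀ h10]
  unfold fN
  split_ifs with h1 h2
  · have ha : 11/(10*N)*|x| - 1/5 ≤ 9/10 := by
      have := (key |x| (11/10)).mpr (by linarith); linarith
    rw [max_eq_right ha, min_eq_left (by norm_num : (9:ℝ)/10 ≤ 2)]; norm_num
  · push_neg at h1
    have ha1 : (9:ℝ)/10 ≤ 11/(10*N)*|x| - 1/5 := by
      have := (key2 |x| (11/10)).mpr (by linarith); linarith
    have ha2 : 11/(10*N)*|x| - 1/5 ≤ 2 := by
      have := (key |x| (22/10)).mpr (by linarith); linarith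
    rw [max_eq_left ha1, min_eq_left ha2]
    field_simp; ring
  · push_neg at h1 h2
    have ha : (2:ℝ) ≤ 11/(10*N)*|x| - 1/5 := by
      have := (key2 |x| (22/10)).mpr (by linarith); linarith
    rw [max_eq_left (by linarith : (9:ℝ)/10 ≤ 11/(10*N)*|x| - 1/5), min_eq_right ha]

lemma fN_bounds {N : ℝ} (hN : 0 < N) (x : ℝ) :
    9/10 ≤ fN (1/10) N x ∧ fN (1/10) N x ≤ 2 := by
  rw [fN_closed hN]
  exact ⟨le_min (le_max_right _ _) (by norm_num), min_le_right _ _⟩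

lemma fN_lip {N : ℝ} (hN : 0 < N) (t s : ℝ) :
    |fN (1/10) N t - fN (1/10) N s| ≤ 11/(10*N) * |t - s| := by
  rw [fN_closed hN, fN_closed hN]
  set a := 11/(10*N)*|t| - 1/5 with hadef
  set b := 11/(10*N)*|s| - 1/5 with hbdef
  have h1 : |min (max a (9/10)) 2 - min (max b (9/10)) 2| ≤ |max a (9/10) - max b (9/10)| := by
    simpa using abs_min_sub_min_le_max (max a (9/10)) 2 (max b (9/10)) 2
  have h2 := abs_max_sub_max_le_abs a b (9/10)
  have h3 : |a - b| = 11/(10*N) * |(|t| - |s|)| := by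
    rw [show a - b = 11/(10*N) * (|t| - |s|) by rw [hadef, hbdef]; ring, abs_mul,
      abs_of_nonneg (by positivity : (0:ℝ) ≤ 11/(10*N))]
  calc |min (max a (9/10)) 2 - min (max b (9/10)) 2| ≤ |a - b| := h1.trans h2
    _ = 11/(10*N) * |(|t| - |s|)| := h3
    _ ≤ 11/(10*N) * |t - s| := by
        exact mul_le_mul_of_nonneg_left (abs_abs_sub_abs_le_abs_sub t s) (by positivity)

lemma sign_abs_le (y : ℝ) : |Real.sign y| ≤ 1 := by
  rcases Real.sign_apply_eq y with h | h | h <;> rw [h] <;> norm_num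

lemma sign_mul_abs' (y : ℝ) : Real.sign y * |y| = y := by
  rcases lt_trichotomy y 0 with h | h | h
  · rw [Real.sign_of_neg h, abs_of_neg h]; ring
  · rw [h, Real.sign_zero, abs_zero]; ring
  · rw [Real.sign_of_pos h, abs_of_pos h]; ring

lemma key_mixed (a b y : ℝ) (ha : 1 ≤ a) (hb0 : 0 ≤ b) (hb : b ≤ 1) (hy : |y| ≤ 1) :
    |y * a - Real.sign y * max (|y| - 1 + b) 0| ≤ |a - b| := by
  have hy0 : (0:ℝ) ≤ |y| := abs_nonneg y
  have he : y * a - Real.sign y * max (|y| - 1 + b) 0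
      = Real.sign y * (|y| * a - max (|y| - 1 + b) 0) := by
    rw [mul_sub, ← mul_assoc, sign_mul_abs']
  rw [he, abs_mul, abs_of_nonneg (by linarith : (0:ℝ) ≤ a - b) ]
  have hcore : |(|y| * a - max (|y| - 1 + b) 0)| ≤ a - b := by
    rcases le_or_gt (|y| - 1 + b) 0 with h | h
    · rw [max_eq_right h, sub_zero, abs_of_nonneg (by positivity)]
      nlinarith [mul_nonneg (by linarith : (0:ℝ) ≤ a) (by linarith : (0:ℝ) ≤ 1 - |y| - b),
        mul_nonneg (by linarith : (0:ℝ) ≤ a - 1) hb0]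
    · rw [max_eq_left h.le, abs_le]
      constructor <;> nlinarith [mul_nonneg (by linarith : (0:ℝ) ≤ 1 - |y|) (by linarith : (0:ℝ) ≤ a - 1),
        mul_nonneg hy0 (by linarith : (0:ℝ) ≤ a - 1)]
  calc |Real.sign y| * |(|y| * a - max (|y| - 1 + b) 0)|
      ≤ |(|y| * a - max (|y| - 1 + b) 0)| :=
        mul_le_of_le_one_left (abs_nonneg _) (sign_abs_le y)
    _ ≤ a - b := hcore

lemma vN_lip_t {N : ℝ} (hN : 0 < N) (t s y : ℝ) (hy : |y| ≤ 1) :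
    |vN (1/10) N (t, y) - vN (1/10) N (s, y)| ≤ |fN (1/10) N t - fN (1/10) N s| := by
  obtain ⟨hat0, hat2⟩ := fN_bounds hN t
  obtain ⟨has0, has2⟩ := fN_bounds hN s
  unfold vN
  simp only
  split_ifs with h1 h2 h2
  · rw [← mul_sub, abs_mul]
    exact mul_le_of_le_one_left (abs_nonneg _) hy
  · push_neg at h2
    exact key_mixed _ _ y h1 (by linarith) h2.le hy
  · push_neg at h1
    rw [abs_sub_comm, abs_sub_comm (fN (1/10) N t)]
    exact key_mixed _ _ y h2 (by linarith) h1.le hy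
  · rw [← mul_sub, abs_mul]
    have h := abs_max_sub_max_le_abs (|y| - 1 + fN (1/10) N t) (|y| - 1 + fN (1/10) N s) 0
    rw [show |y| - 1 + fN (1/10) N t - (|y| - 1 + fN (1/10) N s)
        = fN (1/10) N t - fN (1/10) N s by ring] at h
    calc |Real.sign y| * |max (|y| - 1 + fN (1/10) N t) 0 - max (|y| - 1 + fN (1/10) N s) 0|
        ≤ |max (|y| - 1 + fN (1/10) N t) 0 - max (|y| - 1 + fN (1/10) N s) 0| :=
          mul_le_of_le_one_left (abs_nonneg _) (sign_abs_le y)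
      _ ≤ |fN (1/10) N t - fN (1/10) N s| := h

lemma sign_max_eq (y c : ℝ) (hc : 0 ≤ c) :
    Real.sign y * max (|y| - c) 0 = max (y - c) 0 + min (y + c) 0 := by
  rcases lt_trichotomy y 0 with h | h | h
  · rw [Real.sign_of_neg h, abs_of_neg h, max_eq_right (by linarith : y - c ≤ 0)]
    rcases le_or_gt (y + c) 0 with h2 | h2
    · rw [min_eq_left h2, max_eq_left (by linarith : (0:ℝ) ≤ -y - c)]; ring
    · rw [min_eq_right h2.le, max_eq_right (by linarith : -y - c ≤ 0)]; ring
  · rw [h, Real.sign_zero, zero_mul, zero_sub, zero_add,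
      max_eq_right (by linarith : -c ≤ (0:ℝ)), min_eq_right hc]; ring
  · rw [Real.sign_of_pos h, abs_of_pos h, one_mul,
      min_eq_right (by linarith : (0:ℝ) ≤ y + c)]; ring

lemma vN_lip_y {α N : ℝ} (t : ℝ) (hF0 : 0 ≤ fN α N t) (hF2 : fN α N t ≤ 2) (y z : ℝ) :
    |vN α N (t, y) - vN α N (t, z)| ≤ 2 * |y - z| := by
  unfold vN
  simp only
  split_ifs with h
  · rw [← sub_mul, abs_mul]
    calc |y - z| * |fN α N t| ≤ |y - z| * 2 := by
          apply mul_le_mul_of_nonneg_left _ (abs_nonneg _)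
          rw [abs_of_nonneg hF0]; exact hF2
      _ = 2 * |y - z| := mul_comm _ _
  · push_neg at h
    set c : ℝ := 1 - fN α N t with hcdef
    have hc : (0:ℝ) ≤ c := by rw [hcdef]; linarith
    have e : ∀ w : ℝ, |w| - 1 + fN α N t = |w| - c := fun w => by rw [hcdef]; ring
    rw [e y, e z, sign_max_eq y c hc, sign_max_eq z c hc]
    have h1 : |max (y - c) 0 - max (z - c) 0| ≤ |y - z| := by
      have := abs_max_sub_max_le_abs (y - c) (z - c) 0
      rwa [show y - c - (z - c) = y - z by ring] at this
    have h2 : |min (y + c) 0 - min (z + c) 0| ≤ |y - z| := by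
      have := abs_min_sub_min_le_max (y + c) 0 (z + c) 0
      simpa [show y + c - (z + c) = y - z by ring] using this
    calc |max (y - c) 0 + min (y + c) 0 - (max (z - c) 0 + min (z + c) 0)|
        ≤ |max (y - c) 0 - max (z - c) 0| + |min (y + c) 0 - min (z + c) 0| := by
          rw [show max (y - c) 0 + min (y + c) 0 - (max (z - c) 0 + min (z + c) 0)
            = (max (y - c) 0 - max (z - c) 0) + (min (y + c) 0 - min (z + c) 0) by ring]
          exact abs_add_le _ _
      _ ≤ |y - z| + |y - z| := add_le_add h1 h2
      _ = 2 * |y - z| := by ring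

def clampy (y : ℝ) : ℝ := max (-1) (min y 1)

lemma clampy_abs_le (y : ℝ) : |clampy y| ≤ 1 := by
  rw [abs_le]
  exact ⟨le_max_left _ _, max_le (by norm_num) (min_le_right y 1)⟩

lemma clampy_lip (y z : ℝ) : |clampy y - clampy z| ≤ |y - z| := by
  unfold clampy
  rw [max_comm (-1) (min y 1), max_comm (-1) (min z 1)]
  refine (abs_max_sub_max_le_abs (min y 1) (min z 1) (-1)).trans ?_
  simpa using abs_min_sub_min_le_max y 1 z 1

lemma clampy_eq {y : ℝ} (h : y ∈ Icc (-1:ℝ) 1) : clampy y = y := by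
  unfold clampy
  rw [min_eq_left h.2, max_eq_right h.1]

def Wfun (N : ℝ) (p : ℝ × ℝ) : ℝ := vN (1/10) N (p.1, clampy p.2)

lemma Wfun_lip {N : ℝ} (hN : 0 < N) :
    LipschitzWith (Real.toNNReal (11/(10*N) + 2)) (Wfun N) := by
  have hC : (0:ℝ) ≤ 11/(10*N) + 2 := by positivity
  apply LipschitzWith.of_dist_le_mul
  intro p q
  rw [Real.coe_toNNReal _ hC, Real.dist_eq]
  have hd1 : |p.1 - q.1| ≤ dist p q := by
    rw [Prod.dist_eq, ← Real.dist_eq]; exact le_max_left _ _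
  have hd2 : |p.2 - q.2| ≤ dist p q := by
    rw [Prod.dist_eq, ← Real.dist_eq]; exact le_max_right _ _
  obtain ⟨hb0, hb2⟩ := fN_bounds hN q.1
  calc |Wfun N p - Wfun N q|
      ≤ |vN (1/10) N (p.1, clampy p.2) - vN (1/10) N (q.1, clampy p.2)|
        + |vN (1/10) N (q.1, clampy p.2) - vN (1/10) N (q.1, clampy q.2)| :=
        abs_sub_le _ _ _
    _ ≤ 11/(10*N) * |p.1 - q.1| + 2 * |clampy p.2 - clampy q.2| := by
        refine add_le_add ((vN_lip_t hN _ _ _ (clampy_abs_le _)).trans (fN_lip hN _ _)) ?_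
        exact vN_lip_y q.1 (by linarith) hb2 _ _
    _ ≤ 11/(10*N) * dist p q + 2 * dist p q := by
        refine add_le_add (mul_le_mul_of_nonneg_left hd1 (by positivity)) ?_
        exact mul_le_mul_of_nonneg_left ((clampy_lip _ _).trans hd2) (by norm_num)
    _ = (11/(10*N) + 2) * dist p q := by ring

lemma slice_lip {N : ℝ} (hN : 0 < N) {y : ℝ} (hy : |y| ≤ 1) :
    LipschitzWith (Real.toNNReal (11/(10*N))) (fun t => vN (1/10) N (t, y)) := by
  apply LipschitzWith.of_dist_le_mul
  intro t s
  rw [Real.coe_toNNReal _ (by positivity : (0:ℝ) ≤ 11/(10*N)), Real.dist_eq, Real.dist_eq]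
  exact (vN_lip_t hN t s y hy).trans (fN_lip hN t s)

lemma slice_deriv_bound {N : ℝ} (hN : 0 < N) {y : ℝ} (hy : |y| ≤ 1) (x : ℝ) :
    |deriv (fun t => vN (1/10) N (t, y)) x| ≤ 11/(10*N) := by
  have h1 := norm_fderiv_le_of_lipschitz ℝ (slice_lip hN hy) (x₀ := x)
  rw [Real.coe_toNNReal _ (by positivity : (0:ℝ) ≤ 11/(10*N))] at h1
  have h2 : deriv (fun t => vN (1/10) N (t, y)) x
      = fderiv ℝ (fun t => vN (1/10) N (t, y)) x 1 := rfl
  rw [h2, ← Real.norm_eq_abs]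
  calc ‖fderiv ℝ (fun t => vN (1/10) N (t, y)) x 1‖
      ≤ ‖fderiv ℝ (fun t => vN (1/10) N (t, y)) x‖ * ‖(1:ℝ)‖ :=
        ContinuousLinearMap.le_opNorm _ _
    _ ≤ 11/(10*N) := by rw [norm_one, mul_one]; exact h1

lemma slice_deriv_zero {N : ℝ} (hN : 0 < N) (y x : ℝ) (hx : |x| < N ∨ 2*N < |x|) :
    deriv (fun t => vN (1/10) N (t, y)) x = 0 := by
  have hev : ∀ᶠ t in 𝓝 x, fN (1/10) N t = fN (1/10) N x := by
    rcases hx with hx | hx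
    · have hopen : IsOpen {t : ℝ | |t| < N} := isOpen_lt continuous_abs continuous_const
      filter_upwards [hopen.mem_nhds hx] with t ht
      unfold fN
      rw [if_pos ht.le, if_pos hx.le]
    · have hopen : IsOpen {t : ℝ | 2*N < |t|} := isOpen_lt continuous_const continuous_abs
      filter_upwards [hopen.mem_nhds hx] with t ht
      have ht' : 2*N < |t| := ht
      unfold fN
      rw [if_neg (by push_neg; linarith), if_neg (by push_neg; exact ht'),
        if_neg (by push_neg; linarith), if_neg (by push_neg; exact hx)]
  have hevv : (fun t => vN (1/10) N (t, y)) =ᶠ[𝓝 x] (fun _ => vN (1/10) N (x, y)) := by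
    filter_upwards [hev] with t ht
    simp only [vN, ht]
  rw [hevv.deriv_eq, deriv_const]

/-- `∂v_N/∂x` exists a.e. on `R_N` and `∬_{R_N} |∂v_N/∂x|² ≤ 16/N`. -/
theorem statement5 (α N : ℝ) (hα : α = 1/10) (hN : 0 < N) :
    (∀ᵐ p ∂(volume.restrict (RN N)),
      DifferentiableAt ℝ (fun t => vN α N (t, p.2)) p.1) ∧
    (∫ p in RN N, (deriv (fun t => vN α N (t, p.2)) p.1)^2) ≤ 16 / N := by
  subst hα
  have hRNmeas : MeasurableSet (RN N) := measurableSet_Icc.prod measurableSet_Icc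
  constructor
  · have hrad := (Wfun_lip hN).ae_differentiableAt (μ := (volume : Measure (ℝ × ℝ)))
    filter_upwards [ae_restrict_of_ae hrad, ae_restrict_mem hRNmeas] with p hd hp
    have hy : p.2 ∈ Icc (-1:ℝ) 1 := hp.2
    have hfun : (fun t => vN (1/10) N (t, p.2)) = fun t => Wfun N (t, p.2) := by
      funext t
      unfold Wfun
      simp only
      rw [clampy_eq hy]
    rw [hfun]
    have hcomp := DifferentiableAt.comp (g := Wfun N) (f := fun t : ℝ => (t, p.2)) p.1 hd
      (DifferentiableAt.prodMk differentiableAt_id (differentiableAt_const _))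
    exact hcomp
  · set K : ℝ := 11/(10*N) with hK
    set T : Set (ℝ × ℝ) := (fun p : ℝ × ℝ => |p.1|) ⁻¹' Icc N (2*N) with hT
    have hTmeas : MeasurableSet T := (isClosed_Icc.preimage continuous_fst.abs).measurableSet
    haveI hfin : IsFiniteMeasure (volume.restrict (RN N)) := ⟨by
      rw [Measure.restrict_apply_univ]
      exact (isCompact_Icc.prod isCompact_Icc).measure_lt_top⟩
    have hpoint : ∀ p ∈ RN N,
        (deriv (fun t => vN (1/10) N (t, p.2)) p.1)^2 ≤ T.indicator (fun _ => K^2) p := by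
      intro p hp
      have hy : |p.2| ≤ 1 := abs_le.mpr hp.2
      by_cases hTp : p ∈ T
      · rw [indicator_of_mem hTp]
        have hb := slice_deriv_bound hN hy p.1
        calc (deriv (fun t => vN (1/10) N (t, p.2)) p.1)^2
            = |deriv (fun t => vN (1/10) N (t, p.2)) p.1|^2 := (sq_abs _).symm
          _ ≤ K^2 := pow_le_pow_left₀ (abs_nonneg _) hb 2
      · rw [indicator_of_notMem hTp]
        have hx : |p.1| < N ∨ 2*N < |p.1| := by
          simp only [hT, mem_preimage, mem_Icc, not_and, not_le] at hTp
          rcases lt_or_ge |p.1| N with h | h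
          · exact Or.inl h
          · exact Or.inr (hTp h)
        rw [slice_deriv_zero hN p.2 p.1 hx]
        norm_num
    have hi : Integrable (T.indicator fun _ => K^2) (volume.restrict (RN N)) :=
      (integrable_const _).indicator hTmeas
    have hmono := integral_mono_of_nonneg
      (Filter.Eventually.of_forall fun p => sq_nonneg _) hi
      ((ae_restrict_mem hRNmeas).mono hpoint)
    refine hmono.trans ?_
    rw [integral_indicator hTmeas, setIntegral_const, measureReal_def, Measure.restrict_apply hTmeas]
    have hsub : T ∩ RN N ⊆ Icc (-(2*N)) (2*N) ×ˢ Icc (-1:ℝ) 1 := by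
      rintro p ⟨hpT, hpR⟩
      have h1 : |p.1| ≤ 2*N := hpT.2
      have h1' := abs_le.mp h1
      exact ⟨⟨h1'.1, h1'.2⟩, hpR.2⟩
    have hle : volume (T ∩ RN N) ≤ ENNReal.ofReal (4*N) * ENNReal.ofReal 2 := by
      refine (measure_mono hsub).trans_eq ?_
      rw [Measure.volume_eq_prod, Measure.prod_prod, Real.volume_Icc, Real.volume_Icc]
      congr 1 <;> [congr 1; congr 1] <;> ring
    have htoReal : (volume (T ∩ RN N)).toReal ≤ 8*N := by
      have h2 := ENNReal.toReal_mono (by finiteness) hle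
      rw [ENNReal.toReal_mul, ENNReal.toReal_ofReal (by linarith), ENNReal.toReal_ofReal
        (by norm_num)] at h2
      linarith
    rw [smul_eq_mul]
    calc (volume (T ∩ RN N)).toReal * K^2 ≤ (8*N) * K^2 :=
          mul_le_mul_of_nonneg_right htoReal (sq_nonneg _)
      _ ≤ 16/N := by
          rw [hK]
          have he : 8*N*(11/(10*N))^2 = 242/(25*N) := by field_simp; ring
          rw [he, div_le_div_iff₀ (by positivity) hN]
          nlinarith
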